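/- arXiv:2407.17947 — 3 statements merged into one kernel-verified Lean document; each statement's English description precedes it below -/
import Mathlib

section
/- In a connected graph, for any two distinct edges e and e' there exists a G-twisting that twists exactly e and e'. -/
/-- A `G`-twisting: a set of directed edges of `G` such that every vertex is the
first coordinate of an even number of pairs. -/
def IsTwisting {V : Type*} (G : SimpleGraph V) (T : Set (V × V)) : Prop :=
  (∀ p ∈ T, G.Adj p.1 p.2) ∧ ∀ u : V, Even (Nat.card {v : V | (u, v) ∈ T})

/-- `T` twists the edge `e = {u,v}` if exactly one of `(u,v)`, `(v,u)` lies in `T`. -/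
def Twists {V : Type*} (T : Set (V × V)) (e : Sym2 V) : Prop :=
  ∃ u v, e = s(u, v) ∧ (((u, v) ∈ T) ↔ ((v, u) ∉ T))

lemma twists_iff {V : Type*} (T : Set (V × V)) (u v : V) :
    Twists T s(u, v) ↔ (((u, v) ∈ T) ↔ ((v, u) ∉ T)) := by
  constructor
  · rintro ⟨p, q, h, hc⟩
    rw [Sym2.eq_iff] at h
    rcases h with ⟨rfl, rfl⟩ | ⟨rfl, rfl⟩
    · exact hc
    · tauto
  · intro h; exact ⟨u, v, rfl, h⟩

lemma even_ncard_symmDiff {V : Type*} [Fintype V] {s t : Set V}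
    (hs : Even s.ncard) (ht : Even t.ncard) : Even ((symmDiff s t).ncard) := by
  have h1 := Set.ncard_union_add_ncard_inter s t (Set.toFinite s) (Set.toFinite t)
  have h2 : (symmDiff s t) = (s ∪ t) \ (s ∩ t) := symmDiff_eq_sup_sdiff_inf s t
  have h3 : ((s ∪ t) \ (s ∩ t)).ncard = (s ∪ t).ncard - (s ∩ t).ncard :=
    Set.ncard_diff (Set.inter_subset_left.trans Set.subset_union_left) (Set.toFinite _)
  have h4 : (s ∩ t).ncard ≤ (s ∪ t).ncard :=
    Set.ncard_le_ncard (Set.inter_subset_left.trans Set.subset_union_left) (Set.toFinite _)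
  rw [h2, h3]
  rw [Nat.even_iff] at *
  omega

lemma isTwisting_symmDiff {V : Type*} [Fintype V] {G : SimpleGraph V} {T1 T2 : Set (V × V)}
    (h1 : IsTwisting G T1) (h2 : IsTwisting G T2) : IsTwisting G (symmDiff T1 T2) := by
  constructor
  · intro p hp
    rw [Set.mem_symmDiff] at hp
    rcases hp with ⟨hp, _⟩ | ⟨hp, _⟩
    · exact h1.1 p hp
    · exact h2.1 p hp
  · intro u
    have hset : {v : V | (u, v) ∈ symmDiff T1 T2} =
        symmDiff {v : V | (u, v) ∈ T1} {v : V | (u, v) ∈ T2} := by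
      ext w; simp [Set.mem_symmDiff]
    rw [hset, Nat.card_coe_set_eq]
    have e1 := h1.2 u
    have e2 := h2.2 u
    rw [Nat.card_coe_set_eq] at e1 e2
    exact even_ncard_symmDiff e1 e2

/-- Two distinct edges sharing a vertex can be twisted. -/
lemma base_twisting {V : Type*} [Fintype V] {G : SimpleGraph V} (v : V) (e1 e2 : Sym2 V)
    (h1 : e1 ∈ G.edgeSet) (h2 : e2 ∈ G.edgeSet) (hv1 : v ∈ e1) (hv2 : v ∈ e2)
    (hne : e1 ≠ e2) :
    ∃ T : Set (V × V), IsTwisting G T ∧ ∀ f : Sym2 V, Twists T f ↔ f = e1 ∨ f = e2 := by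
  obtain ⟨x, rfl⟩ := Sym2.mem_iff_exists.mp hv1
  obtain ⟨y, rfl⟩ := Sym2.mem_iff_exists.mp hv2
  rw [SimpleGraph.mem_edgeSet] at h1 h2
  have hvx : v ≠ x := h1.ne
  have hvy : v ≠ y := h2.ne
  have hxy : x ≠ y := by
    intro h; exact hne (by rw [h])
  refine ⟨{(v, x), (v, y)}, ⟨?_, ?_⟩, ?_⟩
  · rintro p hp
    simp only [Set.mem_insert_iff, Set.mem_singleton_iff] at hp
    rcases hp with rfl | rfl
    · exact h1
    · exact h2
  · intro u
    by_cases hu : u = v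
    · subst hu
      have : {w : V | (u, w) ∈ ({(u, x), (u, y)} : Set (V × V))} = {x, y} := by
        ext w; simp [Prod.ext_iff]
      rw [this, Nat.card_coe_set_eq, Set.ncard_pair hxy]
      exact even_two
    · have : {w : V | (u, w) ∈ ({(v, x), (v, y)} : Set (V × V))} = ∅ := by
        ext w; simp [Prod.ext_iff, hu]
      rw [this, Nat.card_coe_set_eq, Set.ncard_empty]
      exact Even.zero
  · intro f
    constructor
    · rintro ⟨p, q, rfl, hc⟩
      have hmem : ∀ a b : V, (a, b) ∈ ({(v, x), (v, y)} : Set (V × V)) ↔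
          (a = v ∧ b = x) ∨ (a = v ∧ b = y) := by
        intro a b; simp [Prod.ext_iff]
      by_cases hpq : (p, q) ∈ ({(v, x), (v, y)} : Set (V × V))
      · rcases (hmem p q).mp hpq with ⟨rfl, rfl⟩ | ⟨rfl, rfl⟩
        · exact Or.inl rfl
        · exact Or.inr rfl
      · have hqp : (q, p) ∈ ({(v, x), (v, y)} : Set (V × V)) :=
          not_not.mp (mt hc.mpr hpq)
        rcases (hmem q p).mp hqp with ⟨rfl, rfl⟩ | ⟨rfl, rfl⟩
        · exact Or.inl (Sym2.eq_swap)
        · exact Or.inr (Sym2.eq_swap)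
    · rintro (rfl | rfl)
      · rw [twists_iff]
        have hin : (v, x) ∈ ({(v, x), (v, y)} : Set (V × V)) := Set.mem_insert _ _
        have hout : (x, v) ∉ ({(v, x), (v, y)} : Set (V × V)) := by
          intro hmem
          simp only [Set.mem_insert_iff, Set.mem_singleton_iff, Prod.mk.injEq] at hmem
          rcases hmem with ⟨h', _⟩ | ⟨h', _⟩ <;> exact hvx h'.symm
        exact iff_of_true hin hout
      · rw [twists_iff]
        have hin : (v, y) ∈ ({(v, x), (v, y)} : Set (V × V)) := Or.inr rfl
        have hout : (y, v) ∉ ({(v, x), (v, y)} : Set (V × V)) := by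
          intro hmem
          simp only [Set.mem_insert_iff, Set.mem_singleton_iff, Prod.mk.injEq] at hmem
          rcases hmem with ⟨h', _⟩ | ⟨h', _⟩ <;> exact hvy h'.symm
        exact iff_of_true hin hout

set_option maxHeartbeats 1000000 in
lemma xor_helper (P1 Q1 P2 Q2 A B C : Prop)
    (h1 : (P1 ↔ ¬Q1) ↔ (A ∨ B)) (h2 : (P2 ↔ ¬Q2) ↔ (B ∨ C))
    (d1 : ¬(A ∧ C)) (d2 : ¬(A ∧ B)) (d3 : ¬(B ∧ C)) :
    ((P1 ∧ ¬P2 ∨ P2 ∧ ¬P1) ↔ ¬(Q1 ∧ ¬Q2 ∨ Q2 ∧ ¬Q1)) ↔ (A ∨ C) := by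
  tauto

lemma key_twisting {V : Type*} [Fintype V] {G : SimpleGraph V} {b c : V} (w : G.Walk b c) :
    ∀ (e e' : Sym2 V), e ∈ G.edgeSet → e' ∈ G.edgeSet → b ∈ e → c ∈ e' → e ≠ e' →
    ∃ T : Set (V × V), IsTwisting G T ∧ ∀ f : Sym2 V, Twists T f ↔ f = e ∨ f = e' := by
  induction w with
  | nil =>
    intro e e' he he' hb hc hne
    exact base_twisting _ e e' he he' hb hc hne
  | @cons b b' c h w ih =>
    intro e e' he he' hb hc hne
    by_cases hfe : s(b, b') = e
    · exact ih e e' he he' (hfe ▸ Sym2.mem_mk_right b b') hc hne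
    by_cases hfe' : s(b, b') = e'
    · exact base_twisting b e e' he he' hb (hfe' ▸ Sym2.mem_mk_left b b') hne
    · obtain ⟨T1, hT1, hT1'⟩ := base_twisting b e s(b, b') he (G.mem_edgeSet.mpr h) hb
        (Sym2.mem_mk_left b b') (fun hh => hfe hh.symm)
      obtain ⟨T2, hT2, hT2'⟩ := ih s(b, b') e' (G.mem_edgeSet.mpr h) he'
        (Sym2.mem_mk_right b b') hc hfe'
      refine ⟨symmDiff T1 T2, isTwisting_symmDiff hT1 hT2, ?_⟩
      intro f
      induction f using Sym2.ind with
      | _ u v =>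
        rw [twists_iff]
        have h1 := ((twists_iff T1 u v).symm.trans (hT1' s(u, v)))
        have h2 := ((twists_iff T2 u v).symm.trans (hT2' s(u, v)))
        have d1 : ¬(s(u, v) = e ∧ s(u, v) = e') := fun ⟨p, q⟩ => hne (p.symm.trans q)
        have d2 : ¬(s(u, v) = e ∧ s(u, v) = s(b, b')) := fun ⟨p, q⟩ => hfe (q.symm.trans p)
        have d3 : ¬(s(u, v) = s(b, b') ∧ s(u, v) = e') := fun ⟨p, q⟩ => hfe' (p.symm.trans q)
        simp only [Set.mem_symmDiff]
        exact xor_helper _ _ _ _ _ _ _ h1 h2 d1 d2 d3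

/-- In a connected graph, for any two distinct edges `e, e'` there is a `G`-twisting
twisting exactly `e` and `e'`. -/
theorem stmt6 {V : Type*} [Fintype V] (G : SimpleGraph V) (hG : G.Connected)
    (e e' : Sym2 V) (he : e ∈ G.edgeSet) (he' : e' ∈ G.edgeSet) (hne : e ≠ e') :
    ∃ T : Set (V × V), IsTwisting G T ∧
      ∀ e'' : Sym2 V, Twists T e'' ↔ (e'' = e ∨ e'' = e') := by
  obtain ⟨⟨a, b⟩, rfl⟩ := Quot.exists_rep e
  obtain ⟨⟨c, d⟩, rfl⟩ := Quot.exists_rep e'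
  obtain ⟨w⟩ := hG.preconnected b c
  exact key_twisting w s(a, b) s(c, d) he he' (Sym2.mem_mk_right a b) (Sym2.mem_mk_left c d) hne
end

section
/- Two CFI graphs over the same base graph are isomorphic via a gadget-preserving isomorphism whenever the twist functions differ on exactly the edges twisted by some twisting that fixes no constraints: concretely, if f, g : E → F_2 satisfy f(e) + g(e) = [T twists e] for a G-twisting T, then the map sending gadget vertex (u, a) to (u, a + χ_u) is an isomorphism from CFI(G,f) to CFI(G,g), where χ_u ∈ F_2^{deg(u)} is the indicator vector of the directed edges at u used by T (listed in neighbor order). -/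
/-- Vertices of the CFI graph over `G`: pairs of a base vertex `u` and an assignment of
values in `F₂` to the neighbors of `u` summing to zero. -/
def CFIVert {V : Type*} [Fintype V] (G : SimpleGraph V) : Type _ :=
  {x : V × (V → ZMod 2) // (∀ v, x.2 v ≠ 0 → G.Adj x.1 v) ∧ ∑ v, x.2 v = 0}

/-- The CFI graph of `G` with twist function `f`. -/
def CFI {V : Type*} [Fintype V] (G : SimpleGraph V) (f : Sym2 V → ZMod 2) :
    SimpleGraph (CFIVert G) :=
  SimpleGraph.fromRel (fun x y =>
    G.Adj x.val.1 y.val.1 ∧ x.val.2 y.val.1 + y.val.2 x.val.1 = f s(x.val.1, y.val.1))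

open scoped Classical in
/-- If `g = f + [T twists ·]` for a `G`-twisting `T`, then the map
`(u, a) ↦ (u, a + χ_u)`, where `χ_u` is the indicator of the directed edges of `T` at `u`,
is an isomorphism from `CFI(G,f)` to `CFI(G,g)`. -/
theorem stmt16 {V : Type*} [Fintype V] (G : SimpleGraph V)
    (T : Set (V × V)) (hT : IsTwisting G T)
    (f g : Sym2 V → ZMod 2)
    (hfg : ∀ e ∈ G.edgeSet, g e = f e + if Twists T e then (1 : ZMod 2) else 0) :
    ∃ φ : CFI G f ≃g CFI G g, ∀ x : CFIVert G,
      (φ x).val.1 = x.val.1 ∧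
      ∀ v : V, (φ x).val.2 v = x.val.2 v + if (x.val.1, v) ∈ T then (1 : ZMod 2) else 0 := by
  classical
  set χ : V → V → ZMod 2 := fun u v => if (u, v) ∈ T then 1 else 0 with hχ
  have hχsum : ∀ u, ∑ v, χ u v = 0 := by
    intro u
    have h1 : ∑ v, χ u v =
        ((Finset.univ.filter (fun v => (u, v) ∈ T)).card : ZMod 2) := by
      simp [hχ, Finset.sum_ite, Finset.sum_const]
    rw [h1]
    have h2 : Nat.card {v : V | (u, v) ∈ T} =
        (Finset.univ.filter (fun v => (u, v) ∈ T)).card := by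
      rw [Nat.card_eq_fintype_card]
      exact Fintype.card_subtype _
    have := hT.2 u
    rw [h2] at this
    rw [ZMod.natCast_eq_zero_iff]
    exact this.two_dvd
  have hmem : ∀ x : CFIVert G,
      (∀ v, x.val.2 v + χ x.val.1 v ≠ 0 → G.Adj x.val.1 v) ∧
      ∑ v, (x.val.2 v + χ x.val.1 v) = 0 := by
    intro x
    constructor
    · intro v hv
      by_cases h : x.val.2 v ≠ 0
      · exact x.property.1 v h
      · push_neg at h
        rw [h, zero_add] at hv
        have : (x.val.1, v) ∈ T := by
          by_contra hc
          simp [hχ, hc] at hv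
        exact hT.1 _ this
    · rw [Finset.sum_add_distrib, x.property.2, hχsum, zero_add]
  let toFun : CFIVert G → CFIVert G :=
    fun x => ⟨(x.val.1, fun v => x.val.2 v + χ x.val.1 v), hmem x⟩
  have hinv : Function.Involutive toFun := by
    intro x
    apply Subtype.ext
    apply Prod.ext
    · rfl
    · funext v
      show x.val.2 v + χ x.val.1 v + χ x.val.1 v = x.val.2 v
      rw [add_assoc]
      have : χ x.val.1 v + χ x.val.1 v = 0 := by
        simp [hχ]; split <;> decide
      rw [this, add_zero]
  have hkey : ∀ u w : V, G.Adj u w →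
      χ u w + χ w u = if Twists T s(u, w) then (1 : ZMod 2) else 0 := by
    intro u w huw
    have hne : u ≠ w := huw.ne
    have htw : Twists T s(u, w) ↔ (((u, w) ∈ T) ↔ ((w, u) ∉ T)) := by
      constructor
      · rintro ⟨a, b, heq, hiff⟩
        rw [Sym2.eq_iff] at heq
        rcases heq with ⟨hu, hw⟩ | ⟨hu, hw⟩
        · subst hu; subst hw; exact hiff
        · subst hu; subst hw; tauto
      · intro h; exact ⟨u, w, rfl, h⟩
    by_cases h1 : (u, w) ∈ T <;> by_cases h2 : (w, u) ∈ T <;>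
      simp [hχ, h1, h2, htw] <;> decide
  have hadj : ∀ x y : CFIVert G,
      (CFI G g).Adj (toFun x) (toFun y) ↔ (CFI G f).Adj x y := by
    intro x y
    have hne : toFun x ≠ toFun y ↔ x ≠ y := by
      constructor
      · intro h hc; exact h (by rw [hc])
      · intro h hc; exact h (hinv.injective hc)
    have hrel : ∀ a b : CFIVert G,
        (G.Adj (toFun a).val.1 (toFun b).val.1 ∧
          (toFun a).val.2 (toFun b).val.1 + (toFun b).val.2 (toFun a).val.1
            = g s((toFun a).val.1, (toFun b).val.1)) ↔
        (G.Adj a.val.1 b.val.1 ∧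
          a.val.2 b.val.1 + b.val.2 a.val.1 = f s(a.val.1, b.val.1)) := by
      intro a b
      show (G.Adj a.val.1 b.val.1 ∧
          (a.val.2 b.val.1 + χ a.val.1 b.val.1) + (b.val.2 a.val.1 + χ b.val.1 a.val.1)
            = g s(a.val.1, b.val.1)) ↔ _
      constructor
      · rintro ⟨hA, hE⟩
        refine ⟨hA, ?_⟩
        rw [hfg _ (G.mem_edgeSet.mpr hA), ← hkey _ _ hA] at hE
        have : a.val.2 b.val.1 + b.val.2 a.val.1 + (χ a.val.1 b.val.1 + χ b.val.1 a.val.1)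
            = f s(a.val.1, b.val.1) + (χ a.val.1 b.val.1 + χ b.val.1 a.val.1) := by
          rw [← hE]; ring
        exact add_right_cancel this
      · rintro ⟨hA, hE⟩
        refine ⟨hA, ?_⟩
        rw [hfg _ (G.mem_edgeSet.mpr hA), ← hkey _ _ hA, ← hE]
        ring
    show ((toFun x ≠ toFun y) ∧ _) ↔ (x ≠ y) ∧ _
    rw [hne]
    beta_reduce
    rw [hrel x y, hrel y x]
  refine ⟨⟨hinv.toPerm, ?_⟩, ?_⟩
  · intro x y
    exact hadj x y
  · intro x
    exact ⟨rfl, fun v => rfl⟩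
end

section
/- If f, g : E → F_2 differ on an odd number of edges of the connected base graph G, then there is no isomorphism from CFI(G,f) to CFI(G,g) that maps each gadget to itself preserving origins: i.e., no family of vectors (χ_u)_{u ∈ V} with χ_u ∈ F_2^{deg(u)}, Σχ_u = 0 for all u, satisfies (χ_u)_i + (χ_v)_j = f({u,v}) + g({u,v}) for all edges {u,v} (with v the i-th neighbor of u and u the j-th neighbor of v). -/
/-- If `f, g` differ on an odd number of edges of the connected base graph, then no
gadget-preserving family `(χ_u)_u` realizes an isomorphism of the CFI graphs:
there is no family `χ` with `χ_u` supported on the neighbors of `u`, summing to zero,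
and satisfying `χ_u(v) + χ_v(u) = f({u,v}) + g({u,v})` for every edge. -/
theorem stmt17 {V : Type*} [Fintype V] (G : SimpleGraph V) (hG : G.Connected)
    (f g : Sym2 V → ZMod 2)
    (hodd : Odd (Nat.card {e : Sym2 V | e ∈ G.edgeSet ∧ f e ≠ g e})) :
    ¬ ∃ χ : V → V → ZMod 2,
        (∀ u v, χ u v ≠ 0 → G.Adj u v) ∧
        (∀ u, ∑ v, χ u v = 0) ∧
        (∀ u v, G.Adj u v → χ u v + χ v u = f s(u, v) + g s(u, v)) := by
  classical
  rintro ⟨χ, h1, h2, h3⟩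
  set P : Finset (V × V) := Finset.univ.filter (fun p => G.Adj p.1 p.2) with hP
  have hsumP : ∑ p ∈ P, χ p.1 p.2 = 0 := by
    have : ∑ p ∈ (Finset.univ : Finset (V × V)), χ p.1 p.2 = 0 := by
      rw [← Finset.univ_product_univ, Finset.sum_product]
      simp [h2]
    rw [← this]
    apply Finset.sum_subset (Finset.subset_univ _)
    intro p _ hp
    by_contra hne
    exact hp (by simp [hP, h1 p.1 p.2 hne])
  have hfib : ∑ p ∈ P, χ p.1 p.2 = ∑ e ∈ G.edgeFinset, (f e + g e) := by
    rw [← Finset.sum_fiberwise_of_maps_to (g := fun p : V × V => s(p.1, p.2))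
      (t := G.edgeFinset) (fun p hp => by
        simp only [hP, Finset.mem_filter] at hp
        simpa [SimpleGraph.mem_edgeFinset] using G.mem_edgeSet.mpr hp.2)]
    apply Finset.sum_congr rfl
    intro e he
    induction e using Sym2.ind with
    | _ u v =>
      have hadj : G.Adj u v := by simpa using he
      have hne : u ≠ v := hadj.ne
      have hfilter : P.filter (fun p => s(p.1, p.2) = s(u, v)) = {(u, v), (v, u)} := by
        ext ⟨a, b⟩
        simp only [hP, Finset.mem_filter, Finset.mem_univ, true_and, Sym2.eq_iff,
          Finset.mem_insert, Finset.mem_singleton, Prod.mk.injEq]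
        constructor
        · tauto
        · rintro (⟨rfl, rfl⟩ | ⟨rfl, rfl⟩) <;> simp [hadj, hadj.symm]
      rw [hfilter, Finset.sum_pair (by simp [hne, Prod.ext_iff])]
      exact h3 u v hadj
  have hab : ∀ a b : ZMod 2, a + b = if a = b then 0 else 1 := by decide
  have hcount : ∑ e ∈ G.edgeFinset, (f e + g e)
      = ((G.edgeFinset.filter (fun e => f e ≠ g e)).card : ZMod 2) := by
    have : ∑ e ∈ G.edgeFinset, (f e + g e)
        = ∑ e ∈ G.edgeFinset, (if f e ≠ g e then (1 : ZMod 2) else 0) := by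
      apply Finset.sum_congr rfl
      intro e _
      rw [hab]
      by_cases h : f e = g e <;> simp [h]
    rw [this, ← Finset.sum_filter, Finset.sum_const, nsmul_eq_mul, mul_one]
  have hcard : (G.edgeFinset.filter (fun e => f e ≠ g e)).card
      = Nat.card {e : Sym2 V | e ∈ G.edgeSet ∧ f e ≠ g e} := by
    rw [Nat.card_coe_set_eq, Set.ncard_eq_toFinset_card']
    congr 1
    ext e
    simp [SimpleGraph.mem_edgeFinset]
  obtain ⟨k, hk⟩ := hodd
  have hone : ((G.edgeFinset.filter (fun e => f e ≠ g e)).card : ZMod 2) = 1 := by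
    rw [hcard, hk]
    push_cast
    ring_nf
    simp [show (2 : ZMod 2) = 0 from rfl]
  have : (0 : ZMod 2) = 1 := by rw [← hsumP, hfib, hcount, hone]
  simp at this
end
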